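/- For every Z ⊆ K with Σ_{a∈Z} δ_a ≤ τ: MER(∅,Z) = E_{q∼P^τ}[r_{1:τ}^{PICO(Z)}(q)], and the policy DP(Z) which, upon observing type u_t with current phase history H^{t−1}, pulls an arm in argmax_{a∈Z}( μ_{u_t,a} + MER(H^{t−1}∪{a},Z) ) attains expected first-phase reward E_{q∼P^τ}[r_{1:τ}^{DP(Z)}(q)] = MER(∅,Z). -/

import Mathlib

open scoped BigOperators Classical

namespace ExposureBandits

/-- Number of pulls of arm `a` in the (0-indexed) phase `j` of the pull sequence `pull`. -/
def pullsInPhase {k : ℕ} (T τ : ℕ) (pull : Fin T → Fin k) (j : ℕ) (a : Fin k) : ℕ :=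
  (Finset.univ.filter (fun t : Fin T =>
    j * τ ≤ (t : ℕ) ∧ (t : ℕ) < (j + 1) * τ ∧ pull t = a)).card

/-- Arm `a` is available at round `t` iff its exposure constraint was satisfied in every
completed phase. -/
def availableAt {k : ℕ} (T τ : ℕ) (δ : Fin k → ℕ) (pull : Fin T → Fin k)
    (t : Fin T) (a : Fin k) : Prop :=
  ∀ j : ℕ, (j + 1) * τ ≤ (t : ℕ) → δ a ≤ pullsInPhase T τ pull j a

/-- Conditional-expected reward of the pull sequence `pull` on the arrival sequence `q`:
pulls of unavailable (departed) arms yield zero utility. -/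
noncomputable def seqReward {k n : ℕ} (T τ : ℕ) (μ : Fin n → Fin k → ℝ) (δ : Fin k → ℕ)
    (pull : Fin T → Fin k) (q : Fin T → Fin n) : ℝ :=
  ∑ t : Fin T, if availableAt T τ δ pull t (pull t) then μ (q t) (pull t) else 0

/-- A deterministic online algorithm for the stochastic-optimization task: the arm pulled at
round `t` may depend only on the types observed in rounds `1,…,t`. -/
def Causal {k n T : ℕ} (f : (Fin T → Fin n) → Fin T → Fin k) : Prop :=
  ∀ q q' : Fin T → Fin n, ∀ t : Fin T,
    (∀ s : Fin T, s ≤ t → q s = q' s) → f q t = f q' t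

abbrev Alg (k n T : ℕ) := {f : (Fin T → Fin n) → Fin T → Fin k // Causal f}

/-- Probability of the i.i.d. arrival sequence `q` under the arrival distribution `P`. -/
noncomputable def seqProb {n : ℕ} (T : ℕ) (P : Fin n → ℝ) (q : Fin T → Fin n) : ℝ :=
  ∏ t : Fin T, P (q t)

/-- Expected reward of the algorithm `A`. -/
noncomputable def expReward {k n : ℕ} (T τ : ℕ) (P : Fin n → ℝ) (μ : Fin n → Fin k → ℝ)
    (δ : Fin k → ℕ) (A : Alg k n T) : ℝ :=
  ∑ q : Fin T → Fin n, seqProb T P q * seqReward T τ μ δ (A.1 q) q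

/-- The optimal expected reward: the value of the benchmark `OPT`. -/
noncomputable def optReward (k n T τ : ℕ) (P : Fin n → ℝ) (μ : Fin n → Fin k → ℝ)
    (δ : Fin k → ℕ) : ℝ :=
  ⨆ A : Alg k n T, expReward T τ P μ δ A

/-- Property 1 (phase independence): whenever the type prefixes of two phases agree, the
algorithm's pulls at the corresponding rounds agree. -/
def PhaseInd {k n T : ℕ} (τ : ℕ) (A : Alg k n T) : Prop :=
  ∀ q : Fin T → Fin n, ∀ i j s : ℕ, s < τ →
    ∀ (hi : i * τ + s < T) (hj : j * τ + s < T),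
      (∀ l : ℕ, l ≤ s → ∀ (hli : i * τ + l < T) (hlj : j * τ + l < T),
          q ⟨i * τ + l, hli⟩ = q ⟨j * τ + l, hlj⟩) →
      A.1 q ⟨i * τ + s, hi⟩ = A.1 q ⟨j * τ + s, hj⟩

/-- Property 2 (commitment to `Z`): the algorithm pulls only arms of `Z` and, with
probability 1, every arm of `Z` receives at least its exposure threshold in every phase. -/
def Committed {k n T : ℕ} (τ : ℕ) (δ : Fin k → ℕ) (Z : Finset (Fin k)) (A : Alg k n T) : Prop :=
  ∀ q : Fin T → Fin n,
    (∀ t : Fin T, A.1 q t ∈ Z) ∧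
    (∀ j : ℕ, (j + 1) * τ ≤ T → ∀ a ∈ Z, δ a ≤ pullsInPhase T τ (A.1 q) j a)

/-- The value of `PICO`: the best expected reward among phase-independent algorithms committed
to some subset of the arms. -/
noncomputable def picoReward (k n T τ : ℕ) (P : Fin n → ℝ) (μ : Fin n → Fin k → ℝ)
    (δ : Fin k → ℕ) : ℝ :=
  ⨆ A : {A : Alg k n T // PhaseInd τ A ∧ ∃ Z : Finset (Fin k), Committed τ δ Z A},
    expReward T τ P μ δ A.1

/-- Expected first-phase reward of the algorithm `A` (for committed algorithms this is
`E_{q ∼ P^τ}[r_{1:τ}^A(q)]`). -/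
noncomputable def expFirstPhase (k n T τ : ℕ) (P : Fin n → ℝ) (μ : Fin n → Fin k → ℝ)
    (A : Alg k n T) : ℝ :=
  ∑ q : Fin T → Fin n, seqProb T P q *
    ∑ t ∈ Finset.univ.filter (fun t : Fin T => (t : ℕ) < τ), μ (q t) (A.1 q t)

/-- The expected first-phase reward of `PICO(Z)`: the best expected first-phase reward over
phase-independent algorithms committed to `Z`. -/
noncomputable def picoZReward (k n T τ : ℕ) (P : Fin n → ℝ) (μ : Fin n → Fin k → ℝ)
    (δ : Fin k → ℕ) (Z : Finset (Fin k)) : ℝ :=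
  ⨆ A : {A : Alg k n T // PhaseInd τ A ∧ Committed τ δ Z A},
    expFirstPhase k n T τ P μ A.1

/-- Auxiliary recursion for `MER`, by the number of remaining rounds in the phase. -/
noncomputable def MERaux {k n : ℕ} (P : Fin n → ℝ) (μ : Fin n → Fin k → ℝ)
    (δ : Fin k → ℕ) (Z : Finset (Fin k)) : ℕ → Multiset (Fin k) → EReal
  | 0, H => if ∀ a ∈ Z, δ a ≤ H.count a then (0 : EReal) else (⊥ : EReal)
  | (r + 1), H =>
      ∑ u : Fin n, (P u : EReal) *
        (Z.sup fun a => ((μ u a : ℝ) : EReal) + MERaux P μ δ Z r (a ::ₘ H))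

/-- The maximum expected remaining reward function `MER(H, Z)`: if `|H| = τ` it is `0` when
every arm of `Z` meets its exposure constraint in `H` and `−∞` otherwise; if `|H| < τ` it is
`E_{u∼P}[max_{a∈Z}(μ_{u,a} + MER(H ∪ {a}, Z))]`. -/
noncomputable def MER {k n : ℕ} (τ : ℕ) (P : Fin n → ℝ) (μ : Fin n → Fin k → ℝ)
    (δ : Fin k → ℕ) (Z : Finset (Fin k)) (H : Multiset (Fin k)) : EReal :=
  MERaux P μ δ Z (τ - Multiset.card H) H

/-- The phase history at round `t`: the multiset of arms pulled so far in the current phase. -/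
def phaseHist {k T : ℕ} (τ : ℕ) (pull : Fin T → Fin k) (t : Fin T) : Multiset (Fin k) :=
  ((Finset.univ.filter (fun s : Fin T =>
      ((t : ℕ) / τ) * τ ≤ (s : ℕ) ∧ (s : ℕ) < (t : ℕ))).val.map pull)


end ExposureBandits

/-!
For an algorithm `A` and `r ≤ τ` let `potential A r` be the expected reward of the first `r`
rounds plus the expected `MER` of the phase history after them, so that `potential A 0 = MER(∅)`
and `potential A τ` is the expected first-phase reward once the exposure constraints are met.
Unfolding `MER` one step averages over the type of round `r`, which the first `r` pulls do not
see; hence the average may be replaced by the type that actually arrives, and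
`potential A (r + 1) ≤ potential A r`, with equality when round `r` is played greedily. Greedy
play also keeps `MER` of the history above `⊥`, so it meets the exposure constraints. Running the
greedy policy afresh in every phase gives a phase-independent algorithm committed to `Z`, which
therefore attains the supremum defining `PICO(Z)`.
-/

namespace EReal

open Finset

lemma coe_mul_sum_of_nonneg {ι : Type*} (s : Finset ι) {c : ℝ} (hc : 0 ≤ c) (f : ι → EReal) :
    (c : EReal) * ∑ i ∈ s, f i = ∑ i ∈ s, (c : EReal) * f i :=
  map_sum (⟨⟨fun x : EReal => (c : EReal) * x, mul_zero _⟩,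
    left_distrib_of_nonneg_of_ne_top (EReal.coe_nonneg.2 hc) (coe_ne_top c)⟩ : EReal →+ EReal) f s

lemma sum_coe_mul_of_nonneg {ι : Type*} (s : Finset ι) {w : ι → ℝ} (hw : ∀ i ∈ s, 0 ≤ w i)
    (x : EReal) : ∑ i ∈ s, (w i : EReal) * x = ((∑ i ∈ s, w i : ℝ) : EReal) * x := by
  induction s using Finset.induction_on with
  | empty => simp
  | insert a s ha ih =>
    rw [sum_insert ha, sum_insert ha, ih fun i hi => hw i (mem_insert_of_mem hi), coe_add,
      right_distrib_of_nonneg (EReal.coe_nonneg.2 (hw a (mem_insert_self a s)))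
        (EReal.coe_nonneg.2 (sum_nonneg fun i hi => hw i (mem_insert_of_mem hi)))]

lemma add_sum_coe_mul_of_sum_eq_one {ι : Type*} (s : Finset ι) {w : ι → ℝ}
    (hw : ∀ i ∈ s, 0 ≤ w i) (hw₁ : ∑ i ∈ s, w i = 1) (c : EReal) (x : ι → EReal) :
    c + ∑ i ∈ s, (w i : EReal) * x i = ∑ i ∈ s, (w i : EReal) * (c + x i) := by
  rw [sum_congr rfl fun i hi => left_distrib_of_nonneg_of_ne_top (EReal.coe_nonneg.2 (hw i hi))
    (coe_ne_top (w i)) c (x i), sum_add_distrib, sum_coe_mul_of_nonneg s hw, hw₁, coe_one, one_mul]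

lemma sum_eq_bot_iff {ι : Type*} {s : Finset ι} {f : ι → EReal} :
    ∑ i ∈ s, f i = ⊥ ↔ ∃ i ∈ s, f i = ⊥ :=
  WithBot.sum_eq_bot_iff

lemma coe_mul_ne_bot {c : ℝ} (hc : 0 ≤ c) {x : EReal} (hx : x ≠ ⊥) : (c : EReal) * x ≠ ⊥ :=
  (mul_ne_bot _ _).2
    ⟨.inl (coe_ne_bot c), .inr hx, .inl (coe_ne_top c), .inl (EReal.coe_nonneg.2 hc)⟩

lemma coe_finset_sum {ι : Type*} (s : Finset ι) (f : ι → ℝ) :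
    ((∑ i ∈ s, f i : ℝ) : EReal) = ∑ i ∈ s, (f i : EReal) :=
  map_sum (⟨⟨Real.toEReal, coe_zero⟩, coe_add⟩ : ℝ →+ EReal) f s

end EReal

namespace ExposureBandits

open Finset Function

section ArrivalProbability

variable {n T : ℕ} {P : Fin n → ℝ}

lemma seqProb_nonneg (hP : ∀ u, 0 ≤ P u) (q : Fin T → Fin n) : 0 ≤ seqProb T P q :=
  prod_nonneg fun t _ => hP (q t)

lemma sum_seqProb (hPsum : ∑ u, P u = 1) : ∑ q : Fin T → Fin n, seqProb T P q = 1 := by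
  simp [seqProb, ← Fintype.prod_sum, hPsum]

lemma seqProb_update_mul (P : Fin n → ℝ) (q : Fin T → Fin n) (t₀ : Fin T) (u : Fin n) :
    seqProb T P (update q t₀ u) * P (q t₀) = seqProb T P q * P u := by
  simp only [seqProb, ← mul_prod_erase univ _ (mem_univ t₀), update_self]
  rw [prod_congr rfl fun t ht => by rw [update_of_ne (ne_of_mem_erase ht)]]
  ring

lemma sum_seqProb_mul_sum_eq (hP : ∀ u, 0 ≤ P u) (hPsum : ∑ u, P u = 1) (t₀ : Fin T)
    (F : (Fin T → Fin n) → Fin n → EReal) (hF : ∀ q v u, F (update q t₀ v) u = F q u) :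
    ∑ q, (seqProb T P q : EReal) * ∑ u, (P u : EReal) * F q u =
      ∑ q, (seqProb T P q : EReal) * F q (q t₀) := by
  -- the involution `(q, u) ↦ (q[t₀ ↦ u], q t₀)` preserves the weight `seqProb q * P u`
  let swap : (Fin T → Fin n) × Fin n → (Fin T → Fin n) × Fin n :=
    fun x => (update x.1 t₀ x.2, x.1 t₀)
  have hswap : Involutive swap := fun x => by simp [swap]
  calc ∑ q, (seqProb T P q : EReal) * ∑ u, (P u : EReal) * F q u
      = ∑ x : (Fin T → Fin n) × Fin n, ((seqProb T P x.1 * P x.2 : ℝ) : EReal) * F x.1 x.2 := by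
        simp only [Fintype.sum_prod_type, EReal.coe_mul_sum_of_nonneg _ (seqProb_nonneg hP _),
          EReal.coe_mul, mul_assoc]
    _ = ∑ x : (Fin T → Fin n) × Fin n,
          ((seqProb T P x.1 * P x.2 : ℝ) : EReal) * F x.1 (x.1 t₀) := by
        rw [← Equiv.sum_comp (hswap.toPerm swap)]
        refine Fintype.sum_congr _ _ fun x => ?_
        simp only [Involutive.coe_toPerm, swap, seqProb_update_mul, hF]
    _ = ∑ q, (seqProb T P q : EReal) * F q (q t₀) := by
        simp only [Fintype.sum_prod_type, mul_comm (seqProb T P _), EReal.coe_mul, mul_assoc,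
          EReal.sum_coe_mul_of_nonneg _ (fun u _ => hP u), hPsum, EReal.coe_one, one_mul]

end ArrivalProbability

section MaxExpectedRemaining

variable {k n τ : ℕ} {P : Fin n → ℝ} {μ : Fin n → Fin k → ℝ} {δ : Fin k → ℕ}
  {Z : Finset (Fin k)} {H : Multiset (Fin k)}

lemma MER_of_card_lt (h : Multiset.card H < τ) :
    MER τ P μ δ Z H =
      ∑ u, (P u : EReal) * Z.sup fun a => (μ u a : EReal) + MER τ P μ δ Z (a ::ₘ H) := by
  simp only [MER, Multiset.card_cons]
  rw [show τ - Multiset.card H = τ - (Multiset.card H + 1) + 1 by omega]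
  rfl

lemma MER_of_card_eq (h : Multiset.card H = τ) :
    MER τ P μ δ Z H = if ∀ a ∈ Z, δ a ≤ H.count a then 0 else ⊥ := by
  rw [MER, h, Nat.sub_self, MERaux]

lemma exposure_of_MER_ne_bot (h : Multiset.card H = τ) (hH : MER τ P μ δ Z H ≠ ⊥) :
    ∀ a ∈ Z, δ a ≤ H.count a := by
  by_contra hexp
  rw [MER_of_card_eq h, if_neg hexp] at hH
  exact hH rfl

def IsGreedyChoice (τ : ℕ) (P : Fin n → ℝ) (μ : Fin n → Fin k → ℝ) (δ : Fin k → ℕ)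
    (Z : Finset (Fin k)) (u : Fin n) (H : Multiset (Fin k)) (a : Fin k) : Prop :=
  a ∈ Z ∧ ∀ b ∈ Z, (μ u b : EReal) + MER τ P μ δ Z (b ::ₘ H) ≤
    (μ u a : EReal) + MER τ P μ δ Z (a ::ₘ H)

lemma IsGreedyChoice.sup_eq {u : Fin n} {a : Fin k} (ha : IsGreedyChoice τ P μ δ Z u H a) :
    (Z.sup fun b => (μ u b : EReal) + MER τ P μ δ Z (b ::ₘ H)) =
      (μ u a : EReal) + MER τ P μ δ Z (a ::ₘ H) :=
  le_antisymm (Finset.sup_le ha.2) (Finset.le_sup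
    (f := fun b => (μ u b : EReal) + MER τ P μ δ Z (b ::ₘ H)) ha.1)

lemma IsGreedyChoice.MER_cons_ne_bot {u : Fin n} {a : Fin k} (ha : IsGreedyChoice τ P μ δ Z u H a)
    (hPu : 0 < P u) (hH : Multiset.card H < τ) (hMER : MER τ P μ δ Z H ≠ ⊥) :
    MER τ P μ δ Z (a ::ₘ H) ≠ ⊥ := by
  rw [MER_of_card_lt hH, Ne, EReal.sum_eq_bot_iff, not_exists] at hMER
  have hterm := fun h => hMER u ⟨Finset.mem_univ u, h⟩
  rw [ha.sup_eq] at hterm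
  intro hbot
  exact hterm (by rw [hbot, EReal.add_bot, EReal.coe_mul_bot_of_pos hPu])

def deficit (δ : Fin k → ℕ) (Z : Finset (Fin k)) (H : Multiset (Fin k)) : ℕ :=
  ∑ a ∈ Z, (δ a - H.count a)

lemma deficit_eq_zero_iff : deficit δ Z H = 0 ↔ ∀ a ∈ Z, δ a ≤ H.count a := by
  simp [deficit, Finset.sum_eq_zero_iff, Nat.sub_eq_zero_iff_le]

lemma deficit_cons_le (a : Fin k) : deficit δ Z (a ::ₘ H) ≤ deficit δ Z H :=
  Finset.sum_le_sum fun b _ => Nat.sub_le_sub_left (Multiset.count_le_count_cons b a H) _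

lemma deficit_cons_add_one {a : Fin k} (ha : a ∈ Z) (h : H.count a < δ a) :
    deficit δ Z (a ::ₘ H) + 1 = deficit δ Z H := by
  have hrest : ∀ b ∈ Z.erase a, δ b - (a ::ₘ H).count b = δ b - H.count b := fun b hb => by
    rw [Multiset.count_cons_of_ne (Finset.ne_of_mem_erase hb)]
  rw [deficit, deficit, ← Finset.add_sum_erase _ _ ha, ← Finset.add_sum_erase _ _ ha,
    Finset.sum_congr rfl hrest, Multiset.count_cons_self]
  omega

lemma exists_deficit_cons_le (hZ : Z.Nonempty) {r : ℕ} (h : deficit δ Z H ≤ r + 1) :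
    ∃ a ∈ Z, deficit δ Z (a ::ₘ H) ≤ r := by
  by_cases h₀ : deficit δ Z H = 0
  · obtain ⟨a, ha⟩ := hZ
    exact ⟨a, ha, (deficit_cons_le a).trans (h₀ ▸ r.zero_le)⟩
  · obtain ⟨a, ha, hlt⟩ : ∃ a ∈ Z, H.count a < δ a := by
      simpa [deficit_eq_zero_iff] using h₀
    exact ⟨a, ha, by have := deficit_cons_add_one ha hlt; omega⟩

lemma MERaux_ne_bot (hP : ∀ u, 0 ≤ P u) (hZ : Z.Nonempty) :
    ∀ (r : ℕ) (H : Multiset (Fin k)), deficit δ Z H ≤ r → MERaux P μ δ Z r H ≠ ⊥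
  | 0, H, h => by
    rw [MERaux, if_pos (deficit_eq_zero_iff.1 (Nat.le_zero.1 h))]
    exact EReal.zero_ne_bot
  | r + 1, H, h => by
    obtain ⟨a, ha, har⟩ := exists_deficit_cons_le hZ h
    have hsup : ∀ u, (Z.sup fun b => (μ u b : EReal) + MERaux P μ δ Z r (b ::ₘ H)) ≠ ⊥ :=
      fun u => ne_bot_of_le_ne_bot
        (EReal.add_ne_bot_iff.2 ⟨EReal.coe_ne_bot _, MERaux_ne_bot hP hZ r _ har⟩)
        (Finset.le_sup (f := fun b => (μ u b : EReal) + MERaux P μ δ Z r (b ::ₘ H)) ha)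
    rw [MERaux, Ne, EReal.sum_eq_bot_iff]
    rintro ⟨u, -, hu⟩
    exact EReal.coe_mul_ne_bot (hP u) (hsup u) hu

lemma MER_zero_ne_bot (hP : ∀ u, 0 ≤ P u) (hZ : Z.Nonempty) (hZτ : ∑ a ∈ Z, δ a ≤ τ) :
    MER τ P μ δ Z 0 ≠ ⊥ :=
  MERaux_ne_bot hP hZ τ 0 (by simpa [deficit] using hZτ)

end MaxExpectedRemaining

section Rounds

variable {k n T : ℕ}

def roundsBetween (T lo hi : ℕ) : Finset (Fin T) :=
  univ.filter fun t : Fin T => lo ≤ (t : ℕ) ∧ (t : ℕ) < hi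

def pullsBetween (pull : Fin T → Fin k) (lo hi : ℕ) : Multiset (Fin k) :=
  (roundsBetween T lo hi).val.map pull

lemma roundsBetween_self (T lo : ℕ) : roundsBetween T lo lo = ∅ := by
  ext t; simp [roundsBetween]

lemma roundsBetween_succ {lo hi : ℕ} (hlo : lo ≤ hi) (hT : hi < T) :
    roundsBetween T lo (hi + 1) = insert ⟨hi, hT⟩ (roundsBetween T lo hi) := by
  ext t
  simp only [roundsBetween, mem_filter, mem_univ, true_and, mem_insert, Fin.ext_iff]
  omega

lemma notMem_roundsBetween (lo : ℕ) {hi : ℕ} (hT : hi < T) :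
    (⟨hi, hT⟩ : Fin T) ∉ roundsBetween T lo hi := by
  simp [roundsBetween]

lemma lt_of_mem_roundsBetween {lo hi : ℕ} {t : Fin T} (ht : t ∈ roundsBetween T lo hi) :
    (t : ℕ) < hi :=
  (mem_filter.1 ht).2.2

lemma card_roundsBetween {lo hi : ℕ} (hlo : lo ≤ hi) (hT : hi ≤ T) :
    (roundsBetween T lo hi).card = hi - lo := by
  induction hi, hlo using Nat.le_induction with
  | base => simp [roundsBetween_self]
  | succ hi hlo ih =>
    rw [roundsBetween_succ hlo hT, card_insert_of_notMem (notMem_roundsBetween lo hT),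
      ih (by omega)]
    omega

lemma pullsBetween_self (pull : Fin T → Fin k) (lo : ℕ) : pullsBetween pull lo lo = 0 := by
  simp [pullsBetween, roundsBetween_self]

lemma pullsBetween_succ (pull : Fin T → Fin k) {lo hi : ℕ} (hlo : lo ≤ hi) (hT : hi < T) :
    pullsBetween pull lo (hi + 1) = pull ⟨hi, hT⟩ ::ₘ pullsBetween pull lo hi := by
  rw [pullsBetween, roundsBetween_succ hlo hT,
    insert_val_of_notMem (notMem_roundsBetween lo hT), Multiset.map_cons, pullsBetween]

lemma card_pullsBetween (pull : Fin T → Fin k) {lo hi : ℕ} (hlo : lo ≤ hi) (hT : hi ≤ T) :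
    Multiset.card (pullsBetween pull lo hi) = hi - lo := by
  rw [pullsBetween, Multiset.card_map, ← card_def, card_roundsBetween hlo hT]

lemma count_pullsBetween (pull : Fin T → Fin k) (τ j : ℕ) (a : Fin k) :
    (pullsBetween pull (j * τ) ((j + 1) * τ)).count a = pullsInPhase T τ pull j a := by
  rw [pullsBetween, Multiset.count_map, pullsInPhase, ← Finset.filter_val, Finset.card_val,
    roundsBetween, filter_filter]
  simp only [and_assoc, eq_comm]

lemma phaseHist_eq_pullsBetween (τ : ℕ) (pull : Fin T → Fin k) (t : Fin T) :
    phaseHist τ pull t = pullsBetween pull (t / τ * τ) t :=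
  rfl

lemma Causal.apply_update_of_lt {f : (Fin T → Fin n) → Fin T → Fin k} (hf : Causal f)
    (q : Fin T → Fin n) {t t₀ : Fin T} (ht : t < t₀) (v : Fin n) :
    f (update q t₀ v) t = f q t :=
  hf _ _ t fun _ hs => update_of_ne (ne_of_lt (lt_of_le_of_lt hs ht)) v q

end Rounds

section FirstPhase

variable {k n T τ : ℕ} {P : Fin n → ℝ} {μ : Fin n → Fin k → ℝ} {δ : Fin k → ℕ}
  {Z : Finset (Fin k)}

def rewardBefore (μ : Fin n → Fin k → ℝ) (pull : Fin T → Fin k) (q : Fin T → Fin n) (r : ℕ) :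
    ℝ :=
  ∑ t ∈ roundsBetween T 0 r, μ (q t) (pull t)

noncomputable def potential (τ : ℕ) (P : Fin n → ℝ) (μ : Fin n → Fin k → ℝ) (δ : Fin k → ℕ)
    (Z : Finset (Fin k)) (A : Alg k n T) (r : ℕ) : EReal :=
  ∑ q, (seqProb T P q : EReal) *
    ((rewardBefore μ (A.1 q) q r : EReal) + MER τ P μ δ Z (pullsBetween (A.1 q) 0 r))

lemma rewardBefore_succ (pull : Fin T → Fin k) (q : Fin T → Fin n) {r : ℕ} (hr : r < T) :
    rewardBefore μ pull q (r + 1) = rewardBefore μ pull q r + μ (q ⟨r, hr⟩) (pull ⟨r, hr⟩) := by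
  rw [rewardBefore, roundsBetween_succ r.zero_le hr, sum_insert (notMem_roundsBetween 0 hr),
    add_comm, rewardBefore]

lemma potential_zero (hP : ∀ u, 0 ≤ P u) (hPsum : ∑ u, P u = 1) (A : Alg k n T) :
    potential τ P μ δ Z A 0 = MER τ P μ δ Z 0 := by
  simp only [potential, rewardBefore, roundsBetween_self, sum_empty, pullsBetween_self,
    EReal.coe_zero, zero_add]
  rw [EReal.sum_coe_mul_of_nonneg _ (fun q _ => seqProb_nonneg hP q), sum_seqProb hPsum,
    EReal.coe_one, one_mul]

lemma potential_eq_expFirstPhase (hτT : τ ≤ T) (A : Alg k n T)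
    (hexp : ∀ q, ∀ a ∈ Z, δ a ≤ (pullsBetween (A.1 q) 0 τ).count a) :
    potential τ P μ δ Z A τ = expFirstPhase k n T τ P μ A := by
  have hMER q : MER τ P μ δ Z (pullsBetween (A.1 q) 0 τ) = 0 := by
    rw [MER_of_card_eq (by rw [card_pullsBetween _ τ.zero_le hτT, Nat.sub_zero]), if_pos (hexp q)]
  simp only [potential, hMER, add_zero, expFirstPhase, EReal.coe_finset_sum, EReal.coe_mul,
    rewardBefore, roundsBetween, Nat.zero_le, true_and]

lemma potential_succ {r : ℕ} (hrT : r < T) (A : Alg k n T) :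
    potential τ P μ δ Z A (r + 1) = ∑ q, (seqProb T P q : EReal) *
      ((rewardBefore μ (A.1 q) q r : EReal) + ((μ (q ⟨r, hrT⟩) (A.1 q ⟨r, hrT⟩) : EReal) +
        MER τ P μ δ Z (A.1 q ⟨r, hrT⟩ ::ₘ pullsBetween (A.1 q) 0 r))) := by
  simp only [potential, rewardBefore_succ _ _ hrT, pullsBetween_succ _ r.zero_le hrT,
    EReal.coe_add, add_assoc]

lemma potential_eq_sum_sup (hP : ∀ u, 0 ≤ P u) (hPsum : ∑ u, P u = 1) {r : ℕ} (hr : r < τ)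
    (hrT : r < T) (A : Alg k n T) :
    potential τ P μ δ Z A r = ∑ q, (seqProb T P q : EReal) *
      ((rewardBefore μ (A.1 q) q r : EReal) + Z.sup fun a =>
        (μ (q ⟨r, hrT⟩) a : EReal) + MER τ P μ δ Z (a ::ₘ pullsBetween (A.1 q) 0 r)) := by
  set t₀ : Fin T := ⟨r, hrT⟩
  have hbefore {t : Fin T} (ht : t ∈ roundsBetween T 0 r) : t < t₀ := lt_of_mem_roundsBetween ht
  have hreward q v : rewardBefore μ (A.1 (update q t₀ v)) (update q t₀ v) r =
      rewardBefore μ (A.1 q) q r :=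
    sum_congr rfl fun t ht => by
      rw [A.2.apply_update_of_lt q (hbefore ht), update_of_ne (hbefore ht).ne]
  have hpulls q v : pullsBetween (A.1 (update q t₀ v)) 0 r = pullsBetween (A.1 q) 0 r :=
    Multiset.map_congr rfl fun t ht => A.2.apply_update_of_lt q (hbefore ht) v
  have hcard q : Multiset.card (pullsBetween (A.1 q) 0 r) < τ := by
    rw [card_pullsBetween _ r.zero_le hrT.le]; omega
  simp only [potential, MER_of_card_lt (hcard _),
    EReal.add_sum_coe_mul_of_sum_eq_one _ (fun u _ => hP u) hPsum]
  exact sum_seqProb_mul_sum_eq hP hPsum t₀ _ fun q v u => by simp only [hreward, hpulls]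

lemma potential_succ_le (hP : ∀ u, 0 ≤ P u) (hPsum : ∑ u, P u = 1) {r : ℕ} (hr : r < τ)
    (hrT : r < T) (A : Alg k n T) (hA : ∀ q, A.1 q ⟨r, hrT⟩ ∈ Z) :
    potential τ P μ δ Z A (r + 1) ≤ potential τ P μ δ Z A r := by
  rw [potential_succ hrT, potential_eq_sum_sup hP hPsum hr hrT]
  refine sum_le_sum fun q _ => mul_le_mul_of_nonneg_left (add_le_add le_rfl ?_)
    (EReal.coe_nonneg.2 (seqProb_nonneg hP q))
  exact le_sup (f := fun a => (μ (q ⟨r, hrT⟩) a : EReal) +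
    MER τ P μ δ Z (a ::ₘ pullsBetween (A.1 q) 0 r)) (hA q)

lemma potential_succ_eq (hP : ∀ u, 0 ≤ P u) (hPsum : ∑ u, P u = 1) {r : ℕ} (hr : r < τ)
    (hrT : r < T) (A : Alg k n T)
    (hA : ∀ q, IsGreedyChoice τ P μ δ Z (q ⟨r, hrT⟩) (pullsBetween (A.1 q) 0 r) (A.1 q ⟨r, hrT⟩)) :
    potential τ P μ δ Z A (r + 1) = potential τ P μ δ Z A r := by
  rw [potential_succ hrT, potential_eq_sum_sup hP hPsum hr hrT]
  simp only [(hA _).sup_eq]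

theorem expFirstPhase_le_MER (hP : ∀ u, 0 ≤ P u) (hPsum : ∑ u, P u = 1) (hτT : τ ≤ T)
    (A : Alg k n T) (hZ : ∀ q (t : Fin T), (t : ℕ) < τ → A.1 q t ∈ Z)
    (hexp : ∀ q, ∀ a ∈ Z, δ a ≤ (pullsBetween (A.1 q) 0 τ).count a) :
    (expFirstPhase k n T τ P μ A : EReal) ≤ MER τ P μ δ Z 0 := by
  have key : ∀ r ≤ τ, potential τ P μ δ Z A r ≤ MER τ P μ δ Z 0 := by
    intro r hr
    induction r with
    | zero => rw [potential_zero hP hPsum]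
    | succ r ih =>
      exact (potential_succ_le hP hPsum hr (by omega) A fun q => hZ q _ hr).trans (ih (by omega))
  simpa only [potential_eq_expFirstPhase hτT A hexp] using key τ le_rfl

lemma exposure_of_isGreedyChoice (hP : ∀ u, 0 < P u) (hMER : MER τ P μ δ Z 0 ≠ ⊥)
    (pull : Fin T → Fin k) (q : Fin T → Fin n) {lo : ℕ} (hT : lo + τ ≤ T)
    (hg : ∀ t : Fin T, lo ≤ t → (t : ℕ) < lo + τ →
      IsGreedyChoice τ P μ δ Z (q t) (pullsBetween pull lo t) (pull t)) :
    ∀ a ∈ Z, δ a ≤ (pullsBetween pull lo (lo + τ)).count a := by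
  have key : ∀ s ≤ τ, MER τ P μ δ Z (pullsBetween pull lo (lo + s)) ≠ ⊥ := by
    intro s hs
    induction s with
    | zero => rwa [add_zero, pullsBetween_self]
    | succ s ih =>
      have hsT : lo + s < T := by omega
      rw [← add_assoc, pullsBetween_succ pull (Nat.le_add_right lo s) hsT]
      have hgs := hg ⟨lo + s, hsT⟩ (Nat.le_add_right lo s) (show lo + s < lo + τ by omega)
      refine hgs.MER_cons_ne_bot (hP _) ?_ (ih (by omega))
      rw [card_pullsBetween _ (Nat.le_add_right lo s) hsT.le]; omega
  refine exposure_of_MER_ne_bot ?_ (key τ le_rfl)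
  rw [card_pullsBetween _ (Nat.le_add_right lo τ) hT]; omega

theorem expFirstPhase_eq_MER_of_isGreedyChoice (hP : ∀ u, 0 < P u) (hPsum : ∑ u, P u = 1)
    (hτT : τ ≤ T) (hMER : MER τ P μ δ Z 0 ≠ ⊥) (A : Alg k n T)
    (hg : ∀ q (t : Fin T), (t : ℕ) < τ →
      IsGreedyChoice τ P μ δ Z (q t) (pullsBetween (A.1 q) 0 t) (A.1 q t)) :
    (expFirstPhase k n T τ P μ A : EReal) = MER τ P μ δ Z 0 := by
  have hP₀ u : 0 ≤ P u := (hP u).le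
  have hexp q : ∀ a ∈ Z, δ a ≤ (pullsBetween (A.1 q) 0 τ).count a := by
    simpa using exposure_of_isGreedyChoice hP hMER (A.1 q) q (lo := 0) (by simpa using hτT)
      fun t _ ht => hg q t (by simpa using ht)
  have key : ∀ r ≤ τ, potential τ P μ δ Z A r = MER τ P μ δ Z 0 := by
    intro r hr
    induction r with
    | zero => rw [potential_zero hP₀ hPsum]
    | succ r ih =>
      rw [potential_succ_eq hP₀ hPsum hr (by omega) A fun q => hg q _ hr, ih (by omega)]
  rw [← potential_eq_expFirstPhase hτT A hexp, key τ le_rfl]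

end FirstPhase

section DynamicProgram

variable {k n T : ℕ} (τ : ℕ) (P : Fin n → ℝ) (μ : Fin n → Fin k → ℝ) (δ : Fin k → ℕ)
  {Z : Finset (Fin k)} (hZ : Z.Nonempty)

noncomputable def greedyArm (u : Fin n) (H : Multiset (Fin k)) : Fin k :=
  (Z.exists_max_image (fun a => (μ u a : EReal) + MER τ P μ δ Z (a ::ₘ H)) hZ).choose

lemma isGreedyChoice_greedyArm (u : Fin n) (H : Multiset (Fin k)) :
    IsGreedyChoice τ P μ δ Z u H (greedyArm τ P μ δ hZ u H) :=
  (Z.exists_max_image _ hZ).choose_spec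

noncomputable def greedyHist (f : ℕ → Fin n) : ℕ → Multiset (Fin k)
  | 0 => 0
  | s + 1 => greedyArm τ P μ δ hZ (f s) (greedyHist f s) ::ₘ greedyHist f s

lemma greedyHist_congr {f g : ℕ → Fin n} {s : ℕ} (h : ∀ l < s, f l = g l) :
    greedyHist τ P μ δ hZ f s = greedyHist τ P μ δ hZ g s := by
  induction s with
  | zero => rfl
  | succ s ih => simp only [greedyHist, h s s.lt_succ_self, ih fun l hl => h l (by omega)]

/-- Indices past the horizon are clamped to the last round; they are never read. -/
def typesFrom (q : Fin T → Fin n) (hT : 0 < T) (lo l : ℕ) : Fin n :=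
  q ⟨min (lo + l) (T - 1), by omega⟩

lemma typesFrom_of_lt (q : Fin T → Fin n) (hT : 0 < T) {lo l : ℕ} (h : lo + l < T) :
    typesFrom q hT lo l = q ⟨lo + l, h⟩ := by
  simp only [typesFrom, min_eq_left (Nat.le_sub_one_of_lt h)]

/-- `DP(Z)`, running the greedy policy afresh in every phase. -/
noncomputable def dpPolicy (q : Fin T → Fin n) (t : Fin T) : Fin k :=
  greedyArm τ P μ δ hZ (q t) (greedyHist τ P μ δ hZ (typesFrom q t.pos (t / τ * τ)) (t % τ))

lemma dpPolicy_apply (q : Fin T → Fin n) {j s : ℕ} (hs : s < τ) (h : j * τ + s < T) :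
    dpPolicy τ P μ δ hZ q ⟨j * τ + s, h⟩ = greedyArm τ P μ δ hZ (q ⟨j * τ + s, h⟩)
      (greedyHist τ P μ δ hZ (typesFrom q (Fin.pos ⟨j * τ + s, h⟩) (j * τ)) s) := by
  have hdiv : (j * τ + s) / τ = j := Nat.div_eq_of_lt_le (by omega) (by rw [Nat.succ_mul]; omega)
  have hmod : (j * τ + s) % τ = s := by
    rw [add_comm, Nat.add_mul_mod_self_right, Nat.mod_eq_of_lt hs]
  simp only [dpPolicy, hdiv, hmod]

lemma dpPolicy_causal : Causal (dpPolicy (T := T) τ P μ δ hZ) := by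
  intro q q' t h
  have ht := Nat.div_add_mod' t τ
  rw [dpPolicy, dpPolicy, h t le_rfl]
  congr 1
  refine greedyHist_congr τ P μ δ hZ fun l hl => h _ ?_
  simp only [Fin.le_def]
  omega

lemma dpPolicy_phaseInd :
    PhaseInd τ (⟨dpPolicy τ P μ δ hZ, dpPolicy_causal τ P μ δ hZ⟩ : Alg k n T) := by
  intro q i j s hs hi hj hag
  simp only [dpPolicy_apply τ P μ δ hZ q hs, hag s le_rfl hi hj]
  congr 1
  refine greedyHist_congr τ P μ δ hZ fun l hl => ?_
  rw [typesFrom_of_lt _ _ (by omega), typesFrom_of_lt _ _ (by omega)]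
  exact hag l hl.le _ _

lemma phaseHist_dpPolicy (hτ : 0 < τ) (q : Fin T → Fin n) (t : Fin T) :
    phaseHist τ (dpPolicy τ P μ δ hZ q) t =
      greedyHist τ P μ δ hZ (typesFrom q t.pos (t / τ * τ)) (t % τ) := by
  have ht := Nat.div_add_mod' t τ
  have key : ∀ s ≤ t % τ, pullsBetween (dpPolicy τ P μ δ hZ q) (t / τ * τ) (t / τ * τ + s) =
      greedyHist τ P μ δ hZ (typesFrom q t.pos (t / τ * τ)) s := by
    intro s hs
    induction s with
    | zero => exact pullsBetween_self _ _
    | succ s ih =>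
      have hsT : t / τ * τ + s < T := by omega
      rw [← add_assoc, pullsBetween_succ _ (Nat.le_add_right _ _) hsT, ih (by omega),
        dpPolicy_apply τ P μ δ hZ q (by have := Nat.mod_lt t hτ; omega) hsT,
        ← typesFrom_of_lt q t.pos hsT]
      rfl
  rw [phaseHist_eq_pullsBetween, ← key _ le_rfl, ht]

lemma isGreedyChoice_dpPolicy (hτ : 0 < τ) (q : Fin T → Fin n) (t : Fin T) :
    IsGreedyChoice τ P μ δ Z (q t) (phaseHist τ (dpPolicy τ P μ δ hZ q) t)
      (dpPolicy τ P μ δ hZ q t) := by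
  rw [phaseHist_dpPolicy τ P μ δ hZ hτ]
  exact isGreedyChoice_greedyArm τ P μ δ hZ _ _

lemma dpPolicy_committed (hτ : 0 < τ) (hP : ∀ u, 0 < P u) (hMER : MER τ P μ δ Z 0 ≠ ⊥) :
    Committed τ δ Z (⟨dpPolicy τ P μ δ hZ, dpPolicy_causal τ P μ δ hZ⟩ : Alg k n T) := by
  intro q
  refine ⟨fun t => (isGreedyChoice_dpPolicy τ P μ δ hZ hτ q t).1, fun j hj a ha => ?_⟩
  rw [← count_pullsBetween, Nat.succ_mul]
  refine exposure_of_isGreedyChoice hP hMER _ q (by rwa [← Nat.succ_mul]) (fun t ht₁ ht₂ => ?_) a ha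
  have hphase : t / τ * τ = j * τ := by
    rw [Nat.div_eq_of_lt_le ht₁ (by rwa [Nat.succ_mul])]
  simpa only [phaseHist_eq_pullsBetween, hphase] using isGreedyChoice_dpPolicy τ P μ δ hZ hτ q t

end DynamicProgram

theorem dp_attains_pico_general
    (k n τ N : ℕ) (hτ : 1 ≤ τ) (hN : 1 ≤ N)
    (P : Fin n → ℝ) (hP : ∀ u, 0 < P u) (hPsum : ∑ u, P u = 1)
    (μ : Fin n → Fin k → ℝ)
    (δ : Fin k → ℕ)
    (Z : Finset (Fin k)) (hZne : Z.Nonempty) (hZfeas : ∑ a ∈ Z, δ a ≤ τ) :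
    MER τ P μ δ Z 0 = ((picoZReward k n (N * τ) τ P μ δ Z : ℝ) : EReal) ∧
    ∀ A : Alg k n (N * τ),
      (∀ (q : Fin (N * τ) → Fin n) (t : Fin (N * τ)),
        A.1 q t ∈ Z ∧
        ∀ b ∈ Z,
          ((μ (q t) b : ℝ) : EReal) + MER τ P μ δ Z (b ::ₘ phaseHist τ (A.1 q) t)
            ≤ ((μ (q t) (A.1 q t) : ℝ) : EReal) +
                MER τ P μ δ Z ((A.1 q t) ::ₘ phaseHist τ (A.1 q) t)) →
      ((expFirstPhase k n (N * τ) τ P μ A : ℝ) : EReal) = MER τ P μ δ Z 0 := by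
  have hτT : τ ≤ N * τ := Nat.le_mul_of_pos_left τ hN
  have hMER : MER τ P μ δ Z 0 ≠ ⊥ := MER_zero_ne_bot (fun u => (hP u).le) hZne hZfeas
  have greedy_attains (A : Alg k n (N * τ))
      (hA : ∀ q t, IsGreedyChoice τ P μ δ Z (q t) (phaseHist τ (A.1 q) t) (A.1 q t)) :
      (expFirstPhase k n (N * τ) τ P μ A : EReal) = MER τ P μ δ Z 0 :=
    expFirstPhase_eq_MER_of_isGreedyChoice hP hPsum hτT hMER A fun q t ht => by
      simpa [phaseHist_eq_pullsBetween, Nat.div_eq_of_lt ht] using hA q t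
  refine ⟨?_, greedy_attains⟩
  let D : Alg k n (N * τ) := ⟨dpPolicy τ P μ δ hZne, dpPolicy_causal τ P μ δ hZne⟩
  have hD : PhaseInd τ D ∧ Committed τ δ Z D :=
    ⟨dpPolicy_phaseInd τ P μ δ hZne, dpPolicy_committed τ P μ δ hZne hτ hP hMER⟩
  have hDval := greedy_attains D (isGreedyChoice_dpPolicy τ P μ δ hZne hτ)
  have hD_max (A : {A : Alg k n (N * τ) // PhaseInd τ A ∧ Committed τ δ Z A}) :
      expFirstPhase k n (N * τ) τ P μ A.1 ≤ expFirstPhase k n (N * τ) τ P μ D := by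
    refine EReal.coe_le_coe_iff.1 (hDval ▸ expFirstPhase_le_MER (fun u => (hP u).le) hPsum hτT
      A.1 (fun q t _ => (A.2.2 q).1 t) fun q a ha => ?_)
    have hcount := count_pullsBetween (A.1.1 q) τ 0 a
    rw [zero_mul, zero_add, one_mul] at hcount
    exact hcount ▸ (A.2.2 q).2 0 (by rwa [zero_add, one_mul]) a ha
  have : Nonempty {A : Alg k n (N * τ) // PhaseInd τ A ∧ Committed τ δ Z A} := ⟨⟨D, hD⟩⟩
  rw [picoZReward, ← hDval,
    le_antisymm (ciSup_le hD_max) (le_ciSup ⟨_, Set.forall_mem_range.2 hD_max⟩ ⟨D, hD⟩)]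

/-- Theorem 3 of the paper: `MER(∅, Z)` equals the expected first-phase reward of `PICO(Z)`,
and any greedy policy `DP(Z)` that pulls an arm maximizing `μ_{u_t,a} + MER(H^{t-1} ∪ {a}, Z)`
attains this value. -/
theorem dp_attains_pico
    (k n τ N : ℕ) (hk : 1 ≤ k) (hn : 1 ≤ n) (hτ : 1 ≤ τ) (hN : 1 ≤ N)
    (P : Fin n → ℝ) (hP : ∀ u, 0 < P u) (hPsum : ∑ u, P u = 1)
    (μ : Fin n → Fin k → ℝ) (hμ : ∀ u a, 0 ≤ μ u a ∧ μ u a ≤ 1)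
    (δ : Fin k → ℕ) (hδ : ∀ a, δ a ≤ τ)
    (Z : Finset (Fin k)) (hZne : Z.Nonempty) (hZfeas : ∑ a ∈ Z, δ a ≤ τ) :
    MER τ P μ δ Z 0 = ((picoZReward k n (N * τ) τ P μ δ Z : ℝ) : EReal) ∧
    ∀ A : Alg k n (N * τ),
      (∀ (q : Fin (N * τ) → Fin n) (t : Fin (N * τ)),
        A.1 q t ∈ Z ∧
        ∀ b ∈ Z,
          ((μ (q t) b : ℝ) : EReal) + MER τ P μ δ Z (b ::ₘ phaseHist τ (A.1 q) t)
            ≤ ((μ (q t) (A.1 q t) : ℝ) : EReal) +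
                MER τ P μ δ Z ((A.1 q t) ::ₘ phaseHist τ (A.1 q) t)) →
      ((expFirstPhase k n (N * τ) τ P μ A : ℝ) : EReal) = MER τ P μ δ Z 0 :=
  dp_attains_pico_general k n τ N hτ hN P hP hPsum μ δ Z hZne hZfeas

end ExposureBandits
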